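/- Let H₃ = {h₁, h₂, h₃} over singleton domain {x} and Y = {1,2,3} with h₁(x) = {2,3}, h₂(x) = {1,3}, h₃(x) = {1,2}. The Set-Valued Weighted Majority Algorithm A satisfies, for every T and every sequence (S_t)_{t=1}^T of subsets of Y, E[∑_{t=1}^T 1[ŷ_t ∉ S_t] − min_{h ∈ H₃} ∑_{t=1}^T 1[h(x) ≠ S_t]] ≤ log₂ 3. -/

import Mathlib

/-!
A round multiplies the weight of a hypothesis `h` by `2 ^ (1[ŷ ∉ S] - 1[h(x) ≠ S])`, exactly the
increment of the regret against `h`, so after `T` rounds the weight of `h` is `2 ^ R(h)`. For H₃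
the expected total weight `W` never increases, so Jensen's inequality gives
`2 ^ E[R(h)] ≤ E[2 ^ R(h)] ≤ E[W⁽ᵀ⁾] ≤ W⁽⁰⁾ = 3` for every `h`.
-/

/-- The prefix of length `t` of a root-to-leaf path `σ`. -/
def pref {Y : Type} {d : ℕ} (σ : Fin d → Y) (t : Fin d) : Fin t.1 → Y :=
  fun i => σ ⟨i.1, i.isLt.trans t.isLt⟩

variable {X Y ι : Type} [Fintype Y] [DecidableEq Y] [Fintype ι]

/-- Weights of the Set-Valued Weighted Majority Algorithm after `t` rounds, as a
(deterministic) function of the sequence of predictions `σ` made so far: on a mistake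
(`σ` last ∉ `S t`) the weights of hypotheses with `h i (x t) = S t` are doubled; on a
correct prediction the weights of hypotheses with `h i (x t) ≠ S t` are halved. -/
noncomputable def wAlg (h : ι → X → Finset Y) (x : ℕ → X) (S : ℕ → Finset Y) :
    (t : ℕ) → (Fin t → Y) → ι → ℝ
  | 0, _, _ => 1
  | t + 1, σ, i =>
      if σ (Fin.last t) ∉ S t then
        (if h i (x t) = S t then 2 * wAlg h x S t (fun j => σ j.castSucc) i
         else wAlg h x S t (fun j => σ j.castSucc) i)
      else
        (if h i (x t) = S t then wAlg h x S t (fun j => σ j.castSucc) i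
         else wAlg h x S t (fun j => σ j.castSucc) i / 2)

/-- The (unnormalized) probability assigned to label `y` at round `t`. -/
noncomputable def vAlg (h : ι → X → Finset Y) (x : ℕ → X) (S : ℕ → Finset Y)
    (t : ℕ) (σ : Fin t → Y) (y : Y) : ℝ :=
  ∑ i : ι, if y ∈ h i (x t) then wAlg h x S t σ i else 0

/-- Probability that the algorithm produces the prediction sequence `π` over `T` rounds. -/
noncomputable def probAlg (h : ι → X → Finset Y) (x : ℕ → X) (S : ℕ → Finset Y)
    (T : ℕ) (π : Fin T → Y) : ℝ :=
  ∏ t : Fin T, vAlg h x S t.1 (pref π t) (π t) / (∑ y : Y, vAlg h x S t.1 (pref π t) y)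

/-- The three hypotheses of H₃, relabeled to `Fin 3`:
h₁ = {2,3} ↦ {1,2}, h₂ = {1,3} ↦ {0,2}, h₃ = {1,2} ↦ {0,1}. -/
def g : Fin 3 → Unit → Finset (Fin 3)
  | 0 => fun _ => {1, 2}
  | 1 => fun _ => {0, 2}
  | 2 => fun _ => {0, 1}

open Finset

section Tuples

variable {α : Type}

lemma pref_snoc_castSucc {T : ℕ} (τ : Fin T → α) (y : α) (u : Fin T) :
    pref (Fin.snoc τ y) u.castSucc = pref τ u := by
  funext i
  exact Fin.snoc_castSucc (α := fun _ => α) (p := τ) y ⟨i.1, i.isLt.trans u.isLt⟩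

lemma pref_snoc_last {T : ℕ} (τ : Fin T → α) (y : α) :
    pref (Fin.snoc τ y) (Fin.last T) = τ := by
  funext i
  exact Fin.snoc_castSucc (α := fun _ => α) (p := τ) y i

lemma sum_fun_fin_succ [Fintype α] {T : ℕ} (F : (Fin (T + 1) → α) → ℝ) :
    ∑ π : Fin (T + 1) → α, F π = ∑ τ : Fin T → α, ∑ y : α, F (Fin.snoc τ y) := by
  rw [← (Fin.snocEquiv fun _ => α).sum_comp F, Fintype.sum_prod_type, sum_comm]
  rfl

end Tuples

section WeightedMajority

variable (h : ι → X → Finset Y) (x : ℕ → X) (S : ℕ → Finset Y)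

def mistakes {T : ℕ} (π : Fin T → Y) : ℝ :=
  ∑ t : Fin T, if π t ∉ S t.1 then 1 else 0

def losses (T : ℕ) (i : ι) : ℝ :=
  ∑ t : Fin T, if h i (x t.1) ≠ S t.1 then 1 else 0

omit [Fintype Y] in
lemma mistakes_succ (T : ℕ) (σ : Fin (T + 1) → Y) :
    mistakes S σ = mistakes S (Fin.init σ) + if σ (Fin.last T) ∉ S T then 1 else 0 := by
  rw [mistakes, Fin.sum_univ_castSucc]
  rfl

omit [Fintype Y] [Fintype ι] in
lemma losses_succ (T : ℕ) (i : ι) :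
    losses h x S (T + 1) i = losses h x S T i + if h i (x T) ≠ S T then 1 else 0 := by
  rw [losses, Fin.sum_univ_castSucc]
  rfl

omit [Fintype Y] [Fintype ι] in
lemma wAlg_succ (T : ℕ) (σ : Fin (T + 1) → Y) (i : ι) :
    wAlg h x S (T + 1) σ i =
      (2 : ℝ) ^ ((if σ (Fin.last T) ∉ S T then 1 else 0 : ℝ) - if h i (x T) ≠ S T then 1 else 0) *
        wAlg h x S T (Fin.init σ) i := by
  rw [wAlg, show Fin.init σ = fun j => σ j.castSucc from rfl]
  split_ifs <;> simp_all
  ring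

omit [Fintype Y] [Fintype ι] in
lemma wAlg_eq_two_rpow (T : ℕ) (σ : Fin T → Y) (i : ι) :
    wAlg h x S T σ i = (2 : ℝ) ^ (mistakes S σ - losses h x S T i) := by
  induction T with
  | zero => simp [wAlg, mistakes, losses]
  | succ T ih =>
    rw [wAlg_succ, ih, ← Real.rpow_add two_pos, mistakes_succ, losses_succ]
    congr 1
    ring

omit [Fintype Y] [Fintype ι] in
lemma wAlg_pos (T : ℕ) (σ : Fin T → Y) (i : ι) : 0 < wAlg h x S T σ i := by
  rw [wAlg_eq_two_rpow]
  positivity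

omit [Fintype Y] [Fintype ι] in
lemma wAlg_snoc (T : ℕ) (τ : Fin T → Y) (y : Y) (i : ι) :
    wAlg h x S (T + 1) (Fin.snoc τ y) i =
      (2 : ℝ) ^ ((if y ∉ S T then 1 else 0 : ℝ) - if h i (x T) ≠ S T then 1 else 0) *
        wAlg h x S T τ i := by
  rw [wAlg_succ, Fin.snoc_last, Fin.init_snoc]

omit [Fintype Y] in
lemma vAlg_nonneg (T : ℕ) (σ : Fin T → Y) (y : Y) : 0 ≤ vAlg h x S T σ y :=
  sum_nonneg fun i _ => by
    split_ifs
    exacts [(wAlg_pos h x S T σ i).le, le_rfl]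

lemma sum_vAlg_pos (T : ℕ) (hne : ∃ i, (h i (x T)).Nonempty) (σ : Fin T → Y) :
    0 < ∑ y, vAlg h x S T σ y := by
  obtain ⟨i, y, hy⟩ := hne
  refine sum_pos' (fun y _ => vAlg_nonneg h x S T σ y) ⟨y, mem_univ y, ?_⟩
  refine sum_pos' (fun j _ => ?_) ⟨i, mem_univ i, by simpa [hy] using wAlg_pos h x S T σ i⟩
  split_ifs
  exacts [(wAlg_pos h x S T σ j).le, le_rfl]

lemma probAlg_nonneg (T : ℕ) (π : Fin T → Y) : 0 ≤ probAlg h x S T π :=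
  prod_nonneg fun t _ =>
    div_nonneg (vAlg_nonneg h x S t _ _) (sum_nonneg fun y _ => vAlg_nonneg h x S t _ y)

lemma probAlg_snoc (T : ℕ) (τ : Fin T → Y) (y : Y) :
    probAlg h x S (T + 1) (Fin.snoc τ y) =
      probAlg h x S T τ * (vAlg h x S T τ y / ∑ y', vAlg h x S T τ y') := by
  rw [probAlg, Fin.prod_univ_castSucc, pref_snoc_last, Fin.snoc_last]
  congr 1
  refine prod_congr rfl fun u _ => ?_
  rw [pref_snoc_castSucc, Fin.snoc_castSucc]
  rfl

lemma sum_probAlg (hne : ∀ t, ∃ i, (h i (x t)).Nonempty) (T : ℕ) :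
    ∑ π : Fin T → Y, probAlg h x S T π = 1 := by
  induction T with
  | zero => simp [probAlg]
  | succ T ih =>
    rw [sum_fun_fin_succ, ← ih]
    refine sum_congr rfl fun τ _ => ?_
    simp only [probAlg_snoc]
    rw [← mul_sum, ← sum_div, div_self (sum_vAlg_pos h x S T (hne T) τ).ne', mul_one]

/-- `E[W⁽ᵗ⁺¹⁾ | τ] ≤ W⁽ᵗ⁾(τ)` for every history `τ`, multiplied through by the normalization
`∑ y, vAlg h x S t τ y`. -/
def ExpectedWeightNonincreasing : Prop :=
  ∀ t (τ : Fin t → Y), ∑ y, vAlg h x S t τ y * ∑ i, wAlg h x S (t + 1) (Fin.snoc τ y) i ≤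
    (∑ y, vAlg h x S t τ y) * ∑ i, wAlg h x S t τ i

lemma expected_sum_wAlg_le
    (hstep : ExpectedWeightNonincreasing h x S) (T : ℕ) :
    ∑ π : Fin T → Y, probAlg h x S T π * ∑ i, wAlg h x S T π i ≤ Fintype.card ι := by
  induction T with
  | zero => simp [probAlg, wAlg]
  | succ T ih =>
    rw [sum_fun_fin_succ]
    refine le_trans (sum_le_sum fun τ _ => ?_) ih
    calc ∑ y, probAlg h x S (T + 1) (Fin.snoc τ y) * ∑ i, wAlg h x S (T + 1) (Fin.snoc τ y) i
        = probAlg h x S T τ *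
            ((∑ y, vAlg h x S T τ y * ∑ i, wAlg h x S (T + 1) (Fin.snoc τ y) i) /
              ∑ y, vAlg h x S T τ y) := by
          rw [mul_div_assoc', mul_sum _ _ (probAlg h x S T τ), sum_div]
          exact sum_congr rfl fun y _ => by rw [probAlg_snoc]; ring
      _ ≤ probAlg h x S T τ * ∑ i, wAlg h x S T τ i := by
          gcongr
          · exact probAlg_nonneg h x S T τ
          · exact div_le_of_le_mul₀ (sum_nonneg fun y _ => vAlg_nonneg h x S T τ y)
              (sum_nonneg fun i _ => (wAlg_pos h x S T τ i).le) (by rw [mul_comm]; exact hstep T τ)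

lemma expected_two_rpow_regret_le
    (hstep : ExpectedWeightNonincreasing h x S) (T : ℕ) (i : ι) :
    ∑ π : Fin T → Y, probAlg h x S T π * (2 : ℝ) ^ (mistakes S π - losses h x S T i) ≤
      Fintype.card ι := by
  refine le_trans (sum_le_sum fun π _ => ?_) (expected_sum_wAlg_le h x S hstep T)
  rw [← wAlg_eq_two_rpow]
  exact mul_le_mul_of_nonneg_left
    (single_le_sum (fun j _ => (wAlg_pos h x S T π j).le) (mem_univ i)) (probAlg_nonneg h x S T π)

lemma expected_regret_le_logb (hne : ∀ t, ∃ i, (h i (x t)).Nonempty)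
    (hstep : ExpectedWeightNonincreasing h x S) (T : ℕ) (i : ι) :
    (∑ π : Fin T → Y, probAlg h x S T π * mistakes S π) - losses h x S T i ≤
      Real.logb 2 (Fintype.card ι) := by
  have hp := sum_probAlg h x S hne T
  have hcard : (0 : ℝ) < Fintype.card ι := by exact_mod_cast Fintype.card_pos_iff.mpr ⟨i⟩
  have hmean : (∑ π : Fin T → Y, probAlg h x S T π * mistakes S π) - losses h x S T i =
      ∑ π : Fin T → Y, probAlg h x S T π * (mistakes S π - losses h x S T i) := by
    simp only [mul_sub, sum_sub_distrib, ← sum_mul, hp, one_mul]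
  rw [Real.le_logb_iff_rpow_le one_lt_two hcard, hmean]
  calc (2 : ℝ) ^ ∑ π : Fin T → Y, probAlg h x S T π * (mistakes S π - losses h x S T i)
      ≤ ∑ π : Fin T → Y, probAlg h x S T π * (2 : ℝ) ^ (mistakes S π - losses h x S T i) := by
        simpa using (convexOn_rpow_left two_pos).map_sum_le
          (fun π _ => probAlg_nonneg h x S T π) hp (fun π _ => Set.mem_univ _)
    _ ≤ Fintype.card ι := expected_two_rpow_regret_le h x S hstep T i

end WeightedMajority

/- If `A = g j`, with `a = w j` and `b` the sum of the other two weights, this reduces to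
`a * b ≤ (2 * a + b) * b / 2`; otherwise no weight is doubled. -/
lemma g_expected_weight_step (w : Fin 3 → ℝ) (hw : ∀ i, 0 ≤ w i) (A : Finset (Fin 3)) :
    ∑ y, (∑ i, if y ∈ g i () then w i else 0) *
        ∑ i, (2 : ℝ) ^ ((if y ∉ A then 1 else 0 : ℝ) - if g i () ≠ A then 1 else 0) * w i ≤
      (∑ y, ∑ i, if y ∈ g i () then w i else 0) * ∑ i, w i := by
  have h0 := hw 0
  have h1 := hw 1
  have h2 := hw 2
  have hA := mem_univ A
  fin_cases hA <;>
    · simp +decide [Fin.sum_univ_three, g, Real.rpow_neg_one]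
      nlinarith [mul_nonneg h0 h1, mul_nonneg h1 h2, mul_nonneg h0 h2, sq_nonneg (w 1 + w 2),
        sq_nonneg (w 0 + w 2), sq_nonneg (w 0 + w 1)]

lemma g_expectedWeightNonincreasing (S : ℕ → Finset (Fin 3)) :
    ExpectedWeightNonincreasing g (fun _ => ()) S := by
  intro t τ
  simp only [wAlg_snoc]
  exact g_expected_weight_step _ (fun i => (wAlg_pos g _ S t τ i).le) (S t)

/-- The Set-Valued Weighted Majority Algorithm on H₃ has expected regret at most log₂ 3. -/
theorem stmt13 (T : ℕ) (S : ℕ → Finset (Fin 3)) :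
    (∑ π : Fin T → Fin 3, probAlg g (fun _ => ()) S T π *
        ∑ t : Fin T, (if π t ∉ S t.1 then (1 : ℝ) else 0))
      - min (min
          (∑ t : Fin T, if ({1, 2} : Finset (Fin 3)) ≠ S t.1 then (1 : ℝ) else 0)
          (∑ t : Fin T, if ({0, 2} : Finset (Fin 3)) ≠ S t.1 then (1 : ℝ) else 0))
          (∑ t : Fin T, if ({0, 1} : Finset (Fin 3)) ≠ S t.1 then (1 : ℝ) else 0)
      ≤ Real.logb 2 3 := by
  have hregret (i : Fin 3) := sub_le_comm.mp <|
    expected_regret_le_logb g (fun _ => ()) S (fun _ => ⟨0, 1, by decide⟩)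
      (g_expectedWeightNonincreasing S) T i
  rw [Fintype.card_fin, Nat.cast_ofNat] at hregret
  rw [sub_le_comm]
  exact le_min (le_min (hregret 0) (hregret 1)) (hregret 2)
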